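/- arXiv:0906.4297 — 7 statements merged into one kernel-verified Lean document; each statement's English description precedes it below -/
import Mathlib

section
/- For every real β with 1 < β ≤ 2, every real number x in the interval [-1/(β-1), 1/(β-1)] admits a sequence (b_j) with b_j ∈ {-1,1} such that x = ∑_{j=1}^∞ b_j β^{-j}. -/
/-!
Greedy expansion: starting from `y₀ = x`, choose the digit `b = ±1` by the sign of the remainder
and pass to `y' = β y - b`. With `M = 1/(β-1)` we have `β M = M + 1`, so this step maps `[-M, M]`
into itself as soon as `M ≥ 1`, i.e. `β ≤ 2`. Then `x = ∑_{j<n} b_j β^{-j-1} + β^{-n} y_n`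
with bounded remainders `y_n`, and the tail term tends to zero.
-/

open Filter Finset Topology

noncomputable def greedyDigit (y : ℝ) : ℝ := if 0 ≤ y then 1 else -1

noncomputable def greedyRemainder (β x : ℝ) : ℕ → ℝ
  | 0 => x
  | n + 1 => β * greedyRemainder β x n - greedyDigit (greedyRemainder β x n)

lemma greedyDigit_eq_neg_one_or_one (y : ℝ) : greedyDigit y = -1 ∨ greedyDigit y = 1 := by
  unfold greedyDigit
  split_ifs <;> simp

lemma abs_greedyDigit (y : ℝ) : |greedyDigit y| = 1 := by
  rcases greedyDigit_eq_neg_one_or_one y with h | h <;> simp [h]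

section

variable {β M : ℝ}

lemma abs_greedyStep_le (hβ : 0 ≤ β) (hM : 1 ≤ M) (hβM : β * M ≤ M + 1) {y : ℝ}
    (hy : |y| ≤ M) : |β * y - greedyDigit y| ≤ M := by
  rw [abs_le] at hy ⊢
  unfold greedyDigit
  split_ifs with h
  · constructor <;> nlinarith [mul_nonneg hβ h]
  · constructor <;> nlinarith [mul_nonpos_of_nonneg_of_nonpos hβ (not_le.mp h).le]

lemma abs_greedyRemainder_le (hβ : 0 ≤ β) (hM : 1 ≤ M) (hβM : β * M ≤ M + 1) {x : ℝ}
    (hx : |x| ≤ M) (n : ℕ) : |greedyRemainder β x n| ≤ M := by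
  induction n with
  | zero => exact hx
  | succ n ih => exact abs_greedyStep_le hβ hM hβM ih

lemma sum_add_greedyRemainder (hβ : β ≠ 0) (x : ℝ) (n : ℕ) :
    ∑ j ∈ range n, greedyDigit (greedyRemainder β x j) * β⁻¹ ^ (j + 1)
      + β⁻¹ ^ n * greedyRemainder β x n = x := by
  induction n with
  | zero => simp [greedyRemainder]
  | succ n ih =>
    rw [sum_range_succ, greedyRemainder]
    linear_combination ih + β⁻¹ ^ n * greedyRemainder β x n * inv_mul_cancel₀ hβ

lemma hasSum_greedyDigit (hβ : 1 < β) {x : ℝ} (hbdd : ∀ n, |greedyRemainder β x n| ≤ M) :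
    HasSum (fun j ↦ greedyDigit (greedyRemainder β x j) * β⁻¹ ^ (j + 1)) x := by
  have hq0 : 0 ≤ β⁻¹ := inv_nonneg.mpr (by linarith)
  have hq1 : β⁻¹ < 1 := inv_lt_one_of_one_lt₀ hβ
  have hnorm : (fun j ↦ ‖greedyDigit (greedyRemainder β x j) * β⁻¹ ^ (j + 1)‖)
      = fun j ↦ β⁻¹ ^ (j + 1) := by
    ext j
    rw [Real.norm_eq_abs, abs_mul, abs_greedyDigit, one_mul, abs_of_nonneg (by positivity)]
  have htail : Tendsto (fun n ↦ β⁻¹ ^ n * greedyRemainder β x n) atTop (𝓝 0) := by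
    refine squeeze_zero_norm (a := fun n ↦ β⁻¹ ^ n * M) (fun n ↦ ?_) ?_
    · rw [Real.norm_eq_abs, abs_mul, abs_of_nonneg (pow_nonneg hq0 n)]
      exact mul_le_mul_of_nonneg_left (hbdd n) (pow_nonneg hq0 n)
    · simpa using (tendsto_pow_atTop_nhds_zero_of_lt_one hq0 hq1).mul_const M
  rw [hasSum_iff_tendsto_nat_of_summable_norm (by
    rw [hnorm]; exact (summable_nat_add_iff 1).mpr (summable_geometric_of_lt_one hq0 hq1))]
  have hpartial := fun n ↦ eq_sub_of_add_eq (sum_add_greedyRemainder (β := β) (by linarith) x n)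
  simp only [hpartial]
  simpa using tendsto_const_nhds.sub htail

end

/-- Every real `x` in `[-1/(β-1), 1/(β-1)]` admits an expansion
`x = ∑_{j=1}^∞ b_j β^{-j}` with bits `b_j ∈ {-1,1}`, for `1 < β ≤ 2`. -/
theorem beta_expansion_exists (β : ℝ) (hβ1 : 1 < β) (hβ2 : β ≤ 2) (x : ℝ)
    (hx : x ∈ Set.Icc (-(1 / (β - 1))) (1 / (β - 1))) :
    ∃ b : ℕ → ℝ, (∀ j, b j = -1 ∨ b j = 1) ∧
      x = ∑' j : ℕ, b j * β ^ (-(j : ℤ) - 1) := by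
  have hβ1' : 0 < β - 1 := sub_pos.mpr hβ1
  have hM : 1 ≤ 1 / (β - 1) := by rw [le_div_iff₀ hβ1']; linarith
  have hβM : β * (1 / (β - 1)) ≤ 1 / (β - 1) + 1 := by field_simp; linarith
  have hbdd := abs_greedyRemainder_le (by linarith) hM hβM (abs_le.mpr hx)
  refine ⟨fun j ↦ greedyDigit (greedyRemainder β x j),
    fun j ↦ greedyDigit_eq_neg_one_or_one _, ?_⟩
  refine (hasSum_greedyDigit hβ1 hbdd).tsum_eq.symm.trans (tsum_congr fun j ↦ ?_)
  rw [show -(j : ℤ) - 1 = -((j + 1 : ℕ) : ℤ) by push_cast; ring, zpow_neg, zpow_natCast, inv_pow]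
end

section
/- Let φ = (1+√5)/2 be the golden ratio. Suppose (u_n) is a bounded real sequence with u_0 = x and u_1 = 0, and (b_n) is a sequence with b_n ∈ {-1,1} satisfying u_{n+2} = u_{n+1} + u_n - b_n for all n ≥ 0. Then for all N, |x - ∑_{n=0}^N b_n φ^{-n}| ≤ φ^{-N+1}. -/
/-!
With `v n = u (n + 1) + (φ - 1) * u n`, the recursion becomes the expanding affine recursion
`v (n + 1) = φ * v n - b n`, and telescoping gives `x - ∑_{n ≤ N} b n φ^{-n} = φ^{-N} v (N + 1)`.
A bounded orbit of `t ↦ φ t - b` with `|b| ≤ 1` stays in `[-(φ - 1)⁻¹, (φ - 1)⁻¹] = [-φ, φ]`: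
outside this interval the distance to it is multiplied by at least `φ` at each step.
-/

open Finset

section ExpandingAffine

variable {K : Type*} [Field K] [LinearOrder K] [IsStrictOrderedRing K]
  {l : K} {v b : ℕ → K}

theorem excess_mul_le_excess_succ (hl : 1 < l) (hb : ∀ n, |b n| ≤ 1)
    (hv : ∀ n, v (n + 1) = l * v n - b n) (n : ℕ) :
    l * (|v n| - (l - 1)⁻¹) ≤ |v (n + 1)| - (l - 1)⁻¹ := by
  have hc : l * (l - 1)⁻¹ = (l - 1)⁻¹ + 1 := by
    field_simp [sub_ne_zero.mpr hl.ne']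
    ring
  have hstep : l * |v n| - |b n| ≤ |v (n + 1)| := by
    have h := abs_sub_abs_le_abs_sub (l * v n) (b n)
    rwa [abs_mul, abs_of_pos (by linarith : (0 : K) < l), ← hv] at h
  linarith [hb n]

theorem pow_mul_excess_le_excess_add (hl : 1 < l) (hb : ∀ n, |b n| ≤ 1)
    (hv : ∀ n, v (n + 1) = l * v n - b n) (n k : ℕ) :
    l ^ k * (|v n| - (l - 1)⁻¹) ≤ |v (n + k)| - (l - 1)⁻¹ := by
  induction k with
  | zero => simp
  | succ k ih =>
    calc l ^ (k + 1) * (|v n| - (l - 1)⁻¹)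
        = l * (l ^ k * (|v n| - (l - 1)⁻¹)) := by ring
      _ ≤ l * (|v (n + k)| - (l - 1)⁻¹) := by gcongr
      _ ≤ |v (n + (k + 1))| - (l - 1)⁻¹ := excess_mul_le_excess_succ hl hb hv (n + k)

theorem abs_le_inv_sub_one_of_bounded [Archimedean K] (hl : 1 < l) (hb : ∀ n, |b n| ≤ 1)
    (hv : ∀ n, v (n + 1) = l * v n - b n) {C : K} (hC : ∀ n, |v n| ≤ C) (n : ℕ) :
    |v n| ≤ (l - 1)⁻¹ := by
  by_contra! hn
  have he : 0 < |v n| - (l - 1)⁻¹ := sub_pos.mpr hn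
  obtain ⟨k, hk⟩ := pow_unbounded_of_one_lt ((C - (l - 1)⁻¹) / (|v n| - (l - 1)⁻¹)) hl
  rw [div_lt_iff₀ he] at hk
  linarith [pow_mul_excess_le_excess_add hl hb hv n k, hC (n + k)]

end ExpandingAffine

theorem sum_mul_zpow_neg_eq_sub {K : Type*} [Field K] {l : K} (hl : l ≠ 0) {v b : ℕ → K}
    (hv : ∀ n, v (n + 1) = l * v n - b n) (N : ℕ) :
    ∑ n ∈ range N, b n * l ^ (-(n : ℤ)) = l * v 0 - l ^ (-(N : ℤ) + 1) * v N := by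
  have hterm : ∀ n : ℕ, b n * l ^ (-(n : ℤ)) =
      l ^ (-(n : ℤ) + 1) * v n - l ^ (-((n + 1 : ℕ) : ℤ) + 1) * v (n + 1) := by
    intro n
    rw [hv, zpow_add_one₀ hl, show -((n + 1 : ℕ) : ℤ) + 1 = -(n : ℤ) by push_cast; ring]
    ring
  rw [sum_congr rfl fun n _ => hterm n, sum_range_sub']
  simp

/-- Golden ratio encoder: if a bounded sequence `u` with `u 0 = x`, `u 1 = 0`
satisfies `u (n+2) = u (n+1) + u n - b n` with bits `b n ∈ {-1,1}`, then the
partial sums `∑_{n=0}^N b n φ^{-n}` approximate `x` to within `φ^{-N+1}`. -/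
theorem golden_ratio_encoder (x : ℝ) (u b : ℕ → ℝ) (C : ℝ)
    (hbound : ∀ n, |u n| ≤ C)
    (hu0 : u 0 = x) (hu1 : u 1 = 0)
    (hb : ∀ n, b n = -1 ∨ b n = 1)
    (hrec : ∀ n, u (n + 2) = u (n + 1) + u n - b n)
    (φ : ℝ) (hφ : φ = (1 + Real.sqrt 5) / 2) :
    ∀ N : ℕ, |x - ∑ n ∈ Finset.range (N + 1), b n * φ ^ (-(n : ℤ))| ≤ φ ^ (-(N : ℤ) + 1) := by
  have hφ1 : 1 < φ := hφ ▸ Real.one_lt_goldenRatio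
  have hφsq : φ ^ 2 = φ + 1 := hφ ▸ Real.goldenRatio_sq
  set v : ℕ → ℝ := fun n => u (n + 1) + (φ - 1) * u n with hv_def
  have hv : ∀ n, v (n + 1) = φ * v n - b n := fun n => by
    simp only [hv_def, hrec]
    linear_combination -u n * hφsq
  have hvC : ∀ n, |v n| ≤ C + (φ - 1) * C := fun n => by
    refine (abs_add_le _ _).trans (add_le_add (hbound _) ?_)
    rw [abs_mul, abs_of_pos (sub_pos.mpr hφ1)]
    exact mul_le_mul_of_nonneg_left (hbound n) (sub_pos.mpr hφ1).le
  have hbφ : (φ - 1)⁻¹ = φ := inv_eq_of_mul_eq_one_right (by linear_combination hφsq)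
  have hvφ : ∀ n, |v n| ≤ φ := fun n => hbφ ▸
    abs_le_inv_sub_one_of_bounded hφ1 (fun n => by rcases hb n with h | h <;> simp [h]) hv hvC n
  intro N
  have hx : φ * v 0 = x := by
    simp only [hv_def, hu0, hu1]
    linear_combination x * hφsq
  rw [sum_mul_zpow_neg_eq_sub (by positivity) hv, hx, sub_sub_cancel, abs_mul,
    abs_of_pos (zpow_pos (by positivity) _)]
  calc φ ^ (-((N + 1 : ℕ) : ℤ) + 1) * |v (N + 1)| ≤ φ ^ (-(N : ℤ)) * φ := by
        push_cast
        rw [show -((N : ℤ) + 1) + 1 = -(N : ℤ) by ring]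
        gcongr
        exact hvφ _
    _ = φ ^ (-(N : ℤ) + 1) := (zpow_add_one₀ (by positivity) _).symm
end

section
/- Let λ₁, λ₂ ∈ (0,1] and let γ = (-λ₁ + √(λ₁² + 4λ₁λ₂))/(2λ₁λ₂), so that λ₁λ₂γ² + λ₁γ - 1 = 0 and 0 < γ < 1. Suppose (u_n) is a bounded real sequence with u_0 = 0, u_1 = x, and (b_n) with b_n ∈ {-1,1} satisfies u_{n+2} = λ₁λ₂ u_n + λ₁ u_{n+1} - b_n for all n ≥ 0. Then for all N, |x - ∑_{n=0}^N b_n γ^{n+1}| ≤ (γ/(1-γ)) γ^N. -/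
/-- Leaky golden ratio encoder: with leakage factors `λ₁, λ₂ ∈ (0,1]` and
`γ = (-λ₁ + √(λ₁² + 4λ₁λ₂))/(2λ₁λ₂)`, a bounded state sequence with
`u 0 = 0`, `u 1 = x` and recursion `u (n+2) = λ₁λ₂ u n + λ₁ u (n+1) - b n`
(bits in `{-1,1}`) yields `|x - ∑_{n=0}^N b n γ^{n+1}| ≤ (γ/(1-γ)) γ^N`. -/
theorem leaky_gre (lam₁ lam₂ : ℝ) (hlam₁ : lam₁ ∈ Set.Ioc (0:ℝ) 1)
    (hlam₂ : lam₂ ∈ Set.Ioc (0:ℝ) 1)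
    (γ : ℝ) (hγdef : γ = (-lam₁ + Real.sqrt (lam₁^2 + 4*lam₁*lam₂)) / (2*lam₁*lam₂))
    (hγroot : lam₁*lam₂*γ^2 + lam₁*γ - 1 = 0) (hγ0 : 0 < γ) (hγ1 : γ < 1)
    (x : ℝ) (u b : ℕ → ℝ) (C : ℝ)
    (hbound : ∀ n, |u n| ≤ C)
    (hu0 : u 0 = 0) (hu1 : u 1 = x)
    (hb : ∀ n, b n = -1 ∨ b n = 1)
    (hrec : ∀ n, u (n + 2) = lam₁*lam₂*u n + lam₁*u (n+1) - b n) :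
    ∀ N : ℕ, |x - ∑ n ∈ Finset.range (N + 1), b n * γ ^ (n+1)| ≤ (γ/(1-γ)) * γ ^ N := by
  set d : ℕ → ℝ := fun n => u (n+2) + lam₁*lam₂*γ*u (n+1) with hd
  have hγne : γ ≠ 0 := ne_of_gt hγ0
  have h1γ : 0 < 1 - γ := by linarith
  -- key algebraic identity: γ*(λ₁ + λ₁λ₂γ) = 1
  have hkey : lam₁*γ + lam₁*lam₂*γ^2 = 1 := by linarith
  -- recursion for d
  have hdrec : ∀ n, d n = γ * (d (n+1) + b (n+1)) := by
    intro n
    have h := hrec (n+1)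
    simp only [hd]
    rw [show n+1+2 = n+3 from rfl, show n+1+1 = n+2 from rfl] at h
    rw [show n+1+2 = n+3 from rfl, show n+1+1 = n+2 from rfl, h]
    linear_combination (-(u (n+2))) * hkey
  -- telescoping: x - S_N = γ^(N+1) * d N
  have hS : ∀ N : ℕ, x - ∑ n ∈ Finset.range (N + 1), b n * γ ^ (n+1) = γ^(N+1) * d N := by
    intro N
    induction N with
    | zero =>
      rw [Finset.sum_range_one]
      show x - b 0 * γ^(0+1) = γ^(0+1) * (u 2 + lam₁*lam₂*γ*u 1)
      have h := hrec 0
      rw [show (0:ℕ)+2 = 2 from rfl, show (0:ℕ)+1 = 1 from rfl, hu0, hu1] at h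
      rw [h, hu1]
      linear_combination (-x) * hkey
    | succ N ih =>
      rw [Finset.sum_range_succ]
      have : x - (∑ n ∈ Finset.range (N + 1), b n * γ ^ (n+1) + b (N+1) * γ^(N+1+1))
          = (x - ∑ n ∈ Finset.range (N + 1), b n * γ ^ (n+1)) - b (N+1) * γ^(N+2) := by
        ring
      rw [this, ih, hdrec N]
      ring
  -- bound on d from boundedness
  have hC : (0:ℝ) ≤ C := le_trans (abs_nonneg _) (hbound 0)
  have hB : ∀ n, |d n| ≤ C * (1 + lam₁*lam₂*γ) := by
    intro n
    have h1 := hbound (n+2)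
    have h2 := hbound (n+1)
    have hpos : 0 ≤ lam₁*lam₂*γ :=
      mul_nonneg (mul_nonneg hlam₁.1.le hlam₂.1.le) hγ0.le
    calc |d n| ≤ |u (n+2)| + |lam₁*lam₂*γ*u (n+1)| := abs_add_le _ _
      _ = |u (n+2)| + lam₁*lam₂*γ*|u (n+1)| := by
          rw [abs_mul, abs_of_nonneg hpos]
      _ ≤ C + lam₁*lam₂*γ*C := by
          have := mul_le_mul_of_nonneg_left h2 hpos
          linarith
      _ = C * (1 + lam₁*lam₂*γ) := by ring
  -- iterated bound: |d n| ≤ γ^k * |d (n+k)| + γ/(1-γ)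
  have hiter : ∀ k n, |d n| ≤ γ^k * |d (n+k)| + γ/(1-γ) := by
    intro k
    induction k with
    | zero =>
      intro n
      have : 0 ≤ γ/(1-γ) := div_nonneg hγ0.le h1γ.le
      simpa using by linarith [this]
    | succ k ih =>
      intro n
      have hb1 : |b (n+1)| = 1 := by rcases hb (n+1) with h | h <;> simp [h]
      have step : |d n| ≤ γ * (|d (n+1)| + 1) := by
        rw [hdrec n, abs_mul, abs_of_nonneg hγ0.le]
        have : |d (n+1) + b (n+1)| ≤ |d (n+1)| + 1 := by
          calc |d (n+1) + b (n+1)| ≤ |d (n+1)| + |b (n+1)| := abs_add_le _ _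
            _ = |d (n+1)| + 1 := by rw [hb1]
        exact mul_le_mul_of_nonneg_left this hγ0.le
      have ih1 := ih (n+1)
      have := mul_le_mul_of_nonneg_left ih1 hγ0.le
      have heq : γ * (γ^k * |d (n+1+k)| + γ/(1-γ)) + γ = γ^(k+1) * |d (n+(k+1))| + γ/(1-γ) := by
        have : n+1+k = n+(k+1) := by ring
        rw [this]
        field_simp
        ring
      calc |d n| ≤ γ * (|d (n+1)| + 1) := step
        _ = γ * |d (n+1)| + γ := by ring
        _ ≤ γ * (γ^k * |d (n+1+k)| + γ/(1-γ)) + γ := by linarith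
        _ = γ^(k+1) * |d (n+(k+1))| + γ/(1-γ) := heq
  -- pass to the limit: |d n| ≤ γ/(1-γ)
  have hdbound : ∀ n, |d n| ≤ γ/(1-γ) := by
    intro n
    have htend : Filter.Tendsto (fun k : ℕ => γ^k * (C * (1 + lam₁*lam₂*γ))) Filter.atTop (nhds 0) := by
      have h := tendsto_pow_atTop_nhds_zero_of_lt_one hγ0.le hγ1
      simpa using h.mul_const (C * (1 + lam₁*lam₂*γ))
    have hle : ∀ k : ℕ, |d n| - γ/(1-γ) ≤ γ^k * (C * (1 + lam₁*lam₂*γ)) := by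
      intro k
      have h1 := hiter k n
      have h2 : γ^k * |d (n+k)| ≤ γ^k * (C * (1 + lam₁*lam₂*γ)) :=
        mul_le_mul_of_nonneg_left (hB (n+k)) (pow_nonneg hγ0.le k)
      linarith
    have := ge_of_tendsto' htend hle
    linarith
  -- conclude
  intro N
  rw [hS N, abs_mul, abs_of_nonneg (pow_nonneg hγ0.le (N+1))]
  have h1 : γ^(N+1) * |d N| ≤ γ^(N+1) * (γ/(1-γ)) :=
    mul_le_mul_of_nonneg_left (hdbound N) (pow_nonneg hγ0.le (N+1))
  have h2 : γ^(N+1) ≤ γ^N := pow_le_pow_of_le_one hγ0.le hγ1.le (by omega)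
  have h3 : 0 ≤ γ/(1-γ) := div_nonneg hγ0.le h1γ.le
  calc γ^(N+1) * |d N| ≤ γ^(N+1) * (γ/(1-γ)) := h1
    _ ≤ γ^N * (γ/(1-γ)) := mul_le_mul_of_nonneg_right h2 h3
    _ = (γ/(1-γ)) * γ^N := by ring
end

section
/- For every integer N ≥ 0, the polynomial P_N(t) = ∑_{j=0}^{N} (b_{3j+1} - b_{3j+1} t - b_{3j+1} t²) t^{3j}, where each b_{3j+1} ∈ {-1,1}, factors as P_N(t) = (1 - t - t²) R_N(t) with R_N(t) = ∑_{j=0}^N b_{3j+1} t^{3j}; consequently P_N has a root at t = φ^{-1} (where φ is the golden ratio), and for t ∈ [0, φ^{-1}], |R_N(t)| ≥ 1 - φ^{-3}/(1 - φ^{-3}) > 0, so φ^{-1} is the unique root of P_N in (0, φ^{-1}]. -/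
/-- Polynomials coming from zero-input GRE bitstreams factor as
`P_N(t) = (1 - t - t²) R_N(t)` with `R_N(t) = ∑_{j=0}^N b_{3j+1} t^{3j}`;
hence `P_N(φ⁻¹) = 0`, and since `|R_N(t)| ≥ 1 - φ⁻³/(1-φ⁻³) > 0` on `[0, φ⁻¹]`,
`φ⁻¹` is the unique root of `P_N` in `(0, φ⁻¹]`. -/
theorem gre_zero_bitstream_factorization (s : ℕ → ℝ)
    (hs : ∀ j, s j = -1 ∨ s j = 1) (N : ℕ)
    (φ : ℝ) (hφ : φ = (1 + Real.sqrt 5) / 2)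
    (P R : ℝ → ℝ)
    (hP : ∀ t, P t = ∑ j ∈ Finset.range (N+1), (s j - s j * t - s j * t^2) * t^(3*j))
    (hR : ∀ t, R t = ∑ j ∈ Finset.range (N+1), s j * t^(3*j)) :
    (∀ t, P t = (1 - t - t^2) * R t) ∧
    P φ⁻¹ = 0 ∧
    (∀ t ∈ Set.Icc (0:ℝ) φ⁻¹, 1 - φ⁻¹^3 / (1 - φ⁻¹^3) ≤ |R t|) ∧
    (0 < 1 - φ⁻¹^3 / (1 - φ⁻¹^3)) ∧
    (∀ t ∈ Set.Ioc (0:ℝ) φ⁻¹, P t = 0 → t = φ⁻¹) := by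
  have h5 : Real.sqrt 5 ^ 2 = 5 := Real.sq_sqrt (by norm_num)
  have h5lb : (2.2:ℝ) < Real.sqrt 5 := by nlinarith [Real.sqrt_nonneg 5]
  have h5ub : Real.sqrt 5 < 2.4 := by nlinarith [Real.sqrt_nonneg 5]
  have hφpos : 0 < φ := by rw [hφ]; linarith
  have hφ2 : φ^2 = φ + 1 := by rw [hφ]; nlinarith
  set x := φ⁻¹ with hx
  have hxval : x = φ - 1 := inv_eq_of_mul_eq_one_right (by nlinarith)
  have hx0 : 0 < x := by rw [hxval, hφ]; linarith
  have hx1 : x < 0.7 := by rw [hxval, hφ]; linarith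
  have hkey : 1 - x - x^2 = 0 := by rw [hxval]; nlinarith
  have hfac : ∀ t, P t = (1 - t - t^2) * R t := by
    intro t
    rw [hP, hR, Finset.mul_sum]
    exact Finset.sum_congr rfl fun j _ => by ring
  have hsabs : ∀ j, |s j| = 1 := by
    intro j; rcases hs j with h | h <;> rw [h] <;> norm_num
  have hx3 : x^3 < 1/2 := by nlinarith
  have hx3pos : 0 < x^3 := by positivity
  have hlow : ∀ t ∈ Set.Icc (0:ℝ) x, 1 - x^3 / (1 - x^3) ≤ |R t| := by
    rintro t ⟨ht0, htx⟩
    have ht3 : t^3 ≤ x^3 := pow_le_pow_left₀ ht0 htx 3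
    have ht3nn : 0 ≤ t^3 := by positivity
    have h1t3 : 0 < 1 - t^3 := by nlinarith
    have h1x3 : 0 < 1 - x^3 := by nlinarith
    have hgeo : ∑ j ∈ Finset.range N, (t^3)^j ≤ 1 / (1 - t^3) := by
      rw [le_div_iff₀ h1t3]
      have hm := geom_sum_mul (t^3) N
      have hp : (0:ℝ) ≤ (t^3)^N := by positivity
      nlinarith
    have hS : |∑ j ∈ Finset.range N, s (j+1) * t^(3*(j+1))| ≤ t^3 / (1 - t^3) := by
      calc |∑ j ∈ Finset.range N, s (j+1) * t^(3*(j+1))|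
          ≤ ∑ j ∈ Finset.range N, |s (j+1) * t^(3*(j+1))| :=
            Finset.abs_sum_le_sum_abs _ _
        _ = ∑ j ∈ Finset.range N, t^3 * (t^3)^j := by
            refine Finset.sum_congr rfl fun j _ => ?_
            rw [abs_mul, hsabs, one_mul, abs_of_nonneg (by positivity),
              ← pow_mul]
            ring_nf
        _ = t^3 * ∑ j ∈ Finset.range N, (t^3)^j := by rw [Finset.mul_sum]
        _ ≤ t^3 * (1/(1-t^3)) := mul_le_mul_of_nonneg_left hgeo ht3nn
        _ = t^3/(1-t^3) := by ring
    have hsplit : R t = (∑ j ∈ Finset.range N, s (j+1) * t^(3*(j+1))) + s 0 := by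
      rw [hR, Finset.sum_range_succ']
      norm_num
    set S := ∑ j ∈ Finset.range N, s (j+1) * t^(3*(j+1)) with hSdef
    have h1 : (1:ℝ) ≤ |R t| + |S| := by
      have : |s 0| ≤ |R t| + |S| := by
        have : s 0 = R t + -S := by rw [hsplit]; ring
        rw [this]
        calc |R t + -S| ≤ |R t| + |(-S)| := abs_add_le _ _
          _ = |R t| + |S| := by rw [abs_neg]
      rwa [hsabs 0] at this
    have hmono : t^3/(1-t^3) ≤ x^3/(1-x^3) := by
      rw [div_le_div_iff₀ h1t3 h1x3]
      nlinarith
    linarith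
  have hcpos : 0 < 1 - x^3 / (1 - x^3) := by
    have h1x3 : 0 < 1 - x^3 := by nlinarith
    have : x^3 / (1-x^3) < 1 := by rw [div_lt_one h1x3]; nlinarith
    linarith
  refine ⟨hfac, ?_, hlow, hcpos, ?_⟩
  · rw [hfac, hkey, zero_mul]
  · rintro t ⟨ht0, htx⟩ hPt
    have hRt : R t ≠ 0 := by
      have := hlow t ⟨le_of_lt ht0, htx⟩
      intro h
      rw [h, abs_zero] at this
      linarith
    have hq : 1 - t - t^2 = 0 := by
      rcases mul_eq_zero.mp (hfac t ▸ hPt) with h | h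
      · exact h
      · exact absurd h hRt
    have hfactor : (t - x) * (t + x + 1) = 0 := by linear_combination hkey - hq
    rcases mul_eq_zero.mp hfactor with h | h
    · linarith
    · linarith
end

section
/- Let signs b_{3j+1} ∈ {-1,1} and R_N(t) = ∑_{j=0}^N b_{3j+1} t^{3j}. Then |R_N(φ^{-1})| ≥ 1 - φ^{-3}/(1-φ^{-3}), and hence the derivative of P_N(t) = (1-t-t²)R_N(t) at t = φ^{-1} satisfies |P_N'(φ^{-1})| ≥ (1 + 2φ^{-1})(1 - φ^{-3}/(1-φ^{-3})) ≥ 1.545. -/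
/-!
At `x = φ⁻¹` we have `1 - x - x² = 0`, so the product rule reduces `P_N'(x)` to
`-(1 + 2x) R_N(x)`. Since `R_N(x)` is a signed power series in `q = x³` with leading
coefficient `±1`, the tail is at most `q / (1 - q)` in absolute value. The numerical
bound comes from the closed form `(1 + 2x)(1 - x³/(1 - x³)) = 5x/2`, using `x² = 1 - x`.
-/

open Finset Real

theorem one_sub_div_one_sub_le_abs_sum_mul_pow {K : Type*} [Field K] [LinearOrder K]
    [IsStrictOrderedRing K] {s : ℕ → K} (h0 : 1 ≤ |s 0|) (hs : ∀ j, |s j| ≤ 1)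
    {q : K} (hq₀ : 0 ≤ q) (hq₁ : q < 1) (N : ℕ) :
    1 - q / (1 - q) ≤ |∑ j ∈ range (N + 1), s j * q ^ j| := by
  have htail : |∑ j ∈ Ico 1 (N + 1), s j * q ^ j| ≤ q / (1 - q) :=
    calc |∑ j ∈ Ico 1 (N + 1), s j * q ^ j|
        ≤ ∑ j ∈ Ico 1 (N + 1), q ^ j := by
          refine (abs_sum_le_sum_abs _ _).trans (sum_le_sum fun j _ => ?_)
          rw [abs_mul, abs_of_nonneg (pow_nonneg hq₀ j)]
          exact mul_le_of_le_one_left (pow_nonneg hq₀ j) (hs j)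
      _ ≤ q ^ 1 / (1 - q) := geom_sum_Ico_le_of_lt_one hq₀ hq₁
      _ = q / (1 - q) := by rw [pow_one]
  rw [sum_range_eq_add_Ico _ (by omega : 0 < N + 1), pow_zero, mul_one]
  have hsplit := abs_add_le (s 0 + ∑ j ∈ Ico 1 (N + 1), s j * q ^ j)
    (-∑ j ∈ Ico 1 (N + 1), s j * q ^ j)
  rw [add_neg_cancel_right, abs_neg] at hsplit
  linarith

theorem deriv_mul_of_eq_zero {𝕜 : Type*} [NontriviallyNormedField 𝕜] {f g : 𝕜 → 𝕜} {x f' : 𝕜}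
    (hf : HasDerivAt f f' x) (hfx : f x = 0) (hg : DifferentiableAt 𝕜 g x) :
    deriv (fun t => f t * g t) x = f' * g x := by
  rw [deriv_fun_mul hf.differentiableAt hg, hf.deriv, hfx, zero_mul, add_zero]

theorem hasDerivAt_one_sub_sub_sq {𝕜 : Type*} [NontriviallyNormedField 𝕜] (x : 𝕜) :
    HasDerivAt (fun t => 1 - t - t ^ 2) (-(1 + 2 * x)) x := by
  refine (((hasDerivAt_id' x).const_sub 1).fun_sub (hasDerivAt_pow 2 x)).congr_deriv ?_
  push_cast
  ring

theorem mul_one_sub_div_one_sub_pow_three_of_sq_add_eq_one {x : ℝ} (hx : x ^ 2 + x = 1) :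
    (1 + 2 * x) * (1 - x ^ 3 / (1 - x ^ 3)) = 5 * x / 2 := by
  have hcube : 1 - x ^ 3 = 2 * (1 - x) := by linear_combination (-x + 1) * hx
  have hx1 : 1 - x ≠ 0 := fun h => by nlinarith
  rw [hcube]
  field_simp
  linear_combination (-2 * x ^ 2 + x - 2) * hx

namespace Real

theorem inv_goldenRatio_sq_add_inv_goldenRatio : goldenRatio⁻¹ ^ 2 + goldenRatio⁻¹ = 1 := by
  rw [inv_goldenRatio, neg_sq, goldenConj_sq]
  ring

theorem inv_goldenRatio_pos : 0 < goldenRatio⁻¹ := inv_pos.2 goldenRatio_pos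

theorem inv_goldenRatio_lt_one : goldenRatio⁻¹ < 1 := inv_lt_one_of_one_lt₀ one_lt_goldenRatio

theorem lt_inv_goldenRatio : (0.618 : ℝ) < goldenRatio⁻¹ := by
  have h5 : (2.236 : ℝ) < √5 := by rw [Real.lt_sqrt (by norm_num)]; norm_num
  rw [inv_goldenRatio, goldenConj]
  linarith

end Real

/-- Derivative lower bound at `φ⁻¹`: with `R_N(t) = ∑_{j=0}^N b_{3j+1} t^{3j}`
(signs `±1`) and `P_N(t) = (1-t-t²)R_N(t)`, we have
`|R_N(φ⁻¹)| ≥ 1 - φ⁻³/(1-φ⁻³)`, hence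
`|P_N'(φ⁻¹)| ≥ (1+2φ⁻¹)(1 - φ⁻³/(1-φ⁻³)) ≥ 1.545`. -/
theorem gre_derivative_lower_bound (s : ℕ → ℝ)
    (hs : ∀ j, s j = -1 ∨ s j = 1) (N : ℕ)
    (φ : ℝ) (hφ : φ = (1 + Real.sqrt 5) / 2)
    (R P : ℝ → ℝ)
    (hR : ∀ t, R t = ∑ j ∈ Finset.range (N+1), s j * t^(3*j))
    (hP : ∀ t, P t = (1 - t - t^2) * R t) :
    1 - φ⁻¹^3 / (1 - φ⁻¹^3) ≤ |R φ⁻¹| ∧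
    (1 + 2*φ⁻¹) * (1 - φ⁻¹^3 / (1 - φ⁻¹^3)) ≤ |deriv P φ⁻¹| ∧
    (1.545 : ℝ) ≤ (1 + 2*φ⁻¹) * (1 - φ⁻¹^3 / (1 - φ⁻¹^3)) := by
  have hx : φ⁻¹ ^ 2 + φ⁻¹ = 1 := hφ ▸ inv_goldenRatio_sq_add_inv_goldenRatio
  have hx₀ : 0 < φ⁻¹ := hφ ▸ inv_goldenRatio_pos
  have hx₁ : φ⁻¹ < 1 := hφ ▸ inv_goldenRatio_lt_one
  have hx₂ : (0.618 : ℝ) < φ⁻¹ := hφ ▸ lt_inv_goldenRatio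
  have habs : ∀ j, |s j| = 1 := fun j => by rcases hs j with h | h <;> simp [h]
  have hRbound : 1 - φ⁻¹ ^ 3 / (1 - φ⁻¹ ^ 3) ≤ |R φ⁻¹| := by
    simp_rw [hR, pow_mul]
    exact one_sub_div_one_sub_le_abs_sum_mul_pow (habs 0).ge (fun j => (habs j).le)
      (pow_nonneg hx₀.le 3) (pow_lt_one₀ hx₀.le hx₁ three_ne_zero) N
  have hderiv : deriv P φ⁻¹ = -(1 + 2 * φ⁻¹) * R φ⁻¹ := by
    have hRdiff : Differentiable ℝ R := by rw [funext hR]; fun_prop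
    rw [funext hP]
    exact deriv_mul_of_eq_zero (hasDerivAt_one_sub_sub_sq _) (by linear_combination -hx) (hRdiff _)
  refine ⟨hRbound, ?_, ?_⟩
  · rw [hderiv, abs_mul, abs_neg, abs_of_pos (by positivity)]
    gcongr
  · rw [mul_one_sub_div_one_sub_pow_three_of_sq_add_eq_one hx]
    linarith
end

section
/- Let λ ≥ 1, let f be a bounded bandlimited function, suppose (u_n) is a bounded real sequence and (b_n), (f_n) satisfy u_n - ρ u_{n-1} = f_n - b_n with ρ ∈ [1 - 1/λ, 1]. Let g ∈ C^∞ ∩ L¹ with g' ∈ L¹, and suppose f(t) = (1/λ)∑_n f_n g(t - n/λ) for all t. Then the reconstruction f̃(t) = (1/λ)∑_n b_n g(t - n/λ) satisfies |f(t) - f̃(t)| ≤ (‖u‖_∞/λ)(∑_n |g(t - n/λ) - g(t - (n+1)/λ)| + (1/λ)∑_n |g(t - n/λ)|) for all t. -/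
open MeasureTheory

/-- Error bound for the first-order leaky (finite-memory) Σ∆ quantizer: with
`u n - ρ u (n-1) = f_n - b_n`, `ρ ∈ [1 - 1/λ, 1]`, bounded state `|u n| ≤ U`,
and reconstruction filter `g ∈ C^∞` with `g, g' ∈ L¹`, the reconstruction
`f̃(t) = (1/λ) ∑ b_n g(t - n/λ)` of `f(t) = (1/λ) ∑ f_n g(t - n/λ)` satisfies
the stated pointwise bound. -/
theorem leaky_first_order_sigma_delta (lam ρ U : ℝ) (hlam : 1 ≤ lam)
    (hρ : ρ ∈ Set.Icc (1 - 1/lam) 1)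
    (f ftilde g : ℝ → ℝ) (u b fn : ℤ → ℝ)
    (hfbd : ∃ M, ∀ t, |f t| ≤ M)
    (hU : ∀ n, |u n| ≤ U)
    (hrec : ∀ n : ℤ, u n - ρ * u (n-1) = fn n - b n)
    (hg : ContDiff ℝ (⊤ : ℕ∞) g) (hgL1 : Integrable g)
    (hg'L1 : Integrable (deriv g))
    (hsum1 : ∀ t : ℝ, Summable fun n : ℤ => fn n * g (t - (n : ℝ)/lam))
    (hsum2 : ∀ t : ℝ, Summable fun n : ℤ => b n * g (t - (n : ℝ)/lam))
    (hsum3 : ∀ t : ℝ, Summable fun n : ℤ => |g (t - (n : ℝ)/lam)|)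
    (hsum4 : ∀ t : ℝ, Summable fun n : ℤ =>
      |g (t - (n : ℝ)/lam) - g (t - ((n : ℝ)+1)/lam)|)
    (hsum5 : ∀ t : ℝ, Summable fun n : ℤ =>
      u n * (g (t - (n : ℝ)/lam) - g (t - ((n : ℝ)+1)/lam)))
    (hsum6 : ∀ t : ℝ, Summable fun n : ℤ => u n * g (t - (n : ℝ)/lam))
    (hf : ∀ t, f t = (1/lam) * ∑' n : ℤ, fn n * g (t - (n : ℝ)/lam))
    (hft : ∀ t, ftilde t = (1/lam) * ∑' n : ℤ, b n * g (t - (n : ℝ)/lam)) :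
    ∀ t, |f t - ftilde t| ≤ (U/lam) *
      ((∑' n : ℤ, |g (t - (n : ℝ)/lam) - g (t - ((n : ℝ)+1)/lam)|) +
        (1/lam) * ∑' n : ℤ, |g (t - (n : ℝ)/lam)|) := by
  intro t
  have hlam0 : lam ≠ 0 := by positivity
  have hlampos : (0:ℝ) < lam := by linarith
  have hU0 : 0 ≤ U := le_trans (abs_nonneg _) (hU 0)
  -- shift identity
  have hshift : ∀ n : ℤ, t - ((n : ℝ)+1)/lam = (t - 1/lam) - (n:ℝ)/lam := by
    intro n; rw [add_div]; ring
  -- summability of shifted series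
  have hS2 : Summable fun n : ℤ => u n * g (t - ((n : ℝ)+1)/lam) := by
    have := hsum6 (t - 1/lam)
    refine this.congr fun n => ?_
    rw [hshift]
  have hS3 : Summable fun n : ℤ => |g (t - ((n : ℝ)+1)/lam)| := by
    have := hsum3 (t - 1/lam)
    refine this.congr fun n => ?_
    rw [hshift]
  -- difference of the two series
  have key : f t - ftilde t = (1/lam) * ∑' n : ℤ, (fn n - b n) * g (t - (n : ℝ)/lam) := by
    rw [hf t, hft t, ← mul_sub, ← Summable.tsum_sub (hsum1 t) (hsum2 t)]
    congr 1
    exact tsum_congr fun n => by ring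
  have hrw : (fun n : ℤ => (fn n - b n) * g (t - (n : ℝ)/lam))
      = fun n : ℤ => (u n - ρ * u (n-1)) * g (t - (n : ℝ)/lam) := by
    funext n; rw [← hrec n]
  -- ∑ u(n-1) g_n = ∑ u n g_{n+1}
  have hreindex : (∑' n : ℤ, u (n-1) * g (t - (n : ℝ)/lam))
      = ∑' n : ℤ, u n * g (t - ((n : ℝ)+1)/lam) := by
    rw [← (Equiv.subRight (1:ℤ)).tsum_eq (fun n : ℤ => u n * g (t - ((n : ℝ)+1)/lam))]
    refine tsum_congr fun n => ?_
    simp only [Equiv.subRight_apply]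
    congr 2
    push_cast
    ring
  have hS2' : Summable fun n : ℤ => u (n-1) * g (t - (n : ℝ)/lam) := by
    rw [← (Equiv.subRight (1:ℤ)).summable_iff] at hS2
    refine hS2.congr fun n => ?_
    simp only [Function.comp, Equiv.subRight_apply]
    congr 2
    push_cast
    ring
  -- summation by parts
  have hsplit : (∑' n : ℤ, (u n - ρ * u (n-1)) * g (t - (n : ℝ)/lam))
      = (∑' n : ℤ, u n * (g (t - (n : ℝ)/lam) - g (t - ((n : ℝ)+1)/lam)))
        + (1 - ρ) * ∑' n : ℤ, u n * g (t - ((n : ℝ)+1)/lam) := by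
    have e1 : (fun n : ℤ => (u n - ρ * u (n-1)) * g (t - (n : ℝ)/lam))
        = fun n : ℤ => u n * g (t - (n : ℝ)/lam) - ρ * (u (n-1) * g (t - (n : ℝ)/lam)) := by
      funext n; ring
    rw [e1, Summable.tsum_sub (hsum6 t) ((hS2'.mul_left ρ)), tsum_mul_left, hreindex]
    have e2 : (fun n : ℤ => u n * (g (t - (n : ℝ)/lam) - g (t - ((n : ℝ)+1)/lam)))
        = fun n : ℤ => u n * g (t - (n : ℝ)/lam) - u n * g (t - ((n : ℝ)+1)/lam) := by
      funext n; ring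
    rw [e2, Summable.tsum_sub (hsum6 t) hS2]
    ring
  rw [key, hrw, hsplit]
  -- bounds
  obtain ⟨hρ1, hρ2⟩ := hρ
  have h1l : (0:ℝ) < 1/lam := by positivity
  have h1ρ : |1 - ρ| ≤ 1/lam := by
    rw [abs_le]
    constructor
    · linarith
    · linarith
  have habsle : ∀ (F : ℤ → ℝ), Summable (fun n => |F n|) → |∑' n, F n| ≤ ∑' n, |F n| := by
    intro F hF
    simpa [Real.norm_eq_abs] using
      norm_tsum_le_tsum_norm (f := F) (by simpa [Real.norm_eq_abs] using hF)
  have habs1 : |∑' n : ℤ, u n * (g (t - (n : ℝ)/lam) - g (t - ((n : ℝ)+1)/lam))|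
      ≤ U * ∑' n : ℤ, |g (t - (n : ℝ)/lam) - g (t - ((n : ℝ)+1)/lam)| := by
    calc |∑' n : ℤ, u n * (g (t - (n : ℝ)/lam) - g (t - ((n : ℝ)+1)/lam))|
        ≤ ∑' n : ℤ, |u n * (g (t - (n : ℝ)/lam) - g (t - ((n : ℝ)+1)/lam))| :=
          habsle _ ((hsum5 t).abs)
      _ ≤ ∑' n : ℤ, U * |g (t - (n : ℝ)/lam) - g (t - ((n : ℝ)+1)/lam)| := by
          refine Summable.tsum_le_tsum (fun n => ?_) ((hsum5 t).abs) ((hsum4 t).mul_left U)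
          rw [abs_mul]
          exact mul_le_mul_of_nonneg_right (hU n) (abs_nonneg _)
      _ = U * ∑' n : ℤ, |g (t - (n : ℝ)/lam) - g (t - ((n : ℝ)+1)/lam)| := tsum_mul_left
  have habs2 : |∑' n : ℤ, u n * g (t - ((n : ℝ)+1)/lam)|
      ≤ U * ∑' n : ℤ, |g (t - (n : ℝ)/lam)| := by
    have hre : (∑' n : ℤ, |g (t - ((n : ℝ)+1)/lam)|) = ∑' n : ℤ, |g (t - (n : ℝ)/lam)| := by
      rw [← (Equiv.addRight (1:ℤ)).tsum_eq (fun n : ℤ => |g (t - (n : ℝ)/lam)|)]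
      refine tsum_congr fun n => ?_
      simp only [Equiv.coe_addRight]
      congr 3
      push_cast
      ring
    calc |∑' n : ℤ, u n * g (t - ((n : ℝ)+1)/lam)|
        ≤ ∑' n : ℤ, |u n * g (t - ((n : ℝ)+1)/lam)| := habsle _ hS2.abs
      _ ≤ ∑' n : ℤ, U * |g (t - ((n : ℝ)+1)/lam)| := by
          refine Summable.tsum_le_tsum (fun n => ?_) hS2.abs (hS3.mul_left U)
          rw [abs_mul]
          exact mul_le_mul_of_nonneg_right (hU n) (abs_nonneg _)
      _ = U * ∑' n : ℤ, |g (t - ((n : ℝ)+1)/lam)| := tsum_mul_left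
      _ = U * ∑' n : ℤ, |g (t - (n : ℝ)/lam)| := by rw [hre]
  set A := ∑' n : ℤ, u n * (g (t - (n : ℝ)/lam) - g (t - ((n : ℝ)+1)/lam))
  set B := ∑' n : ℤ, u n * g (t - ((n : ℝ)+1)/lam)
  set SA := ∑' n : ℤ, |g (t - (n : ℝ)/lam) - g (t - ((n : ℝ)+1)/lam)|
  set SB := ∑' n : ℤ, |g (t - (n : ℝ)/lam)|
  have : |(1/lam) * (A + (1-ρ)*B)| ≤ (1/lam) * (U * SA + (1/lam) * (U * SB)) := by
    rw [abs_mul, abs_of_pos (by positivity : (0:ℝ) < 1/lam)]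
    refine mul_le_mul_of_nonneg_left ?_ (by positivity)
    calc |A + (1-ρ)*B| ≤ |A| + |1-ρ| * |B| := by
          rw [← abs_mul]; exact abs_add_le _ _
      _ ≤ U * SA + (1/lam) * (U * SB) := by
          refine add_le_add habs1 ?_
          exact mul_le_mul h1ρ habs2 (abs_nonneg _) (by positivity)
  calc |(1/lam) * (A + (1-ρ)*B)| ≤ (1/lam) * (U * SA + (1/lam) * (U * SB)) := this
    _ = (U/lam) * (SA + (1/lam) * SB) := by ring
end

section
/- Let β ∈ (1,2], x ∈ [-1,1], and suppose bits b_j ∈ {-1,1} are generated by: u₁ = βx, b₁ = sign-with-flakiness Q^ν(u₁), u_{j+1} = β(u_j - b_j), b_{j+1} = Q^ν(u_{j+1}), where Q^ν(u) = 1 if u ≥ ν, -1 if u < -ν, and either ±1 if |u| ≤ ν, with ν ≤ ε. If 1 < β < (2+ε)/(ε+1), then the state sequence satisfies |u_j| ≤ β(1+ε) for all j throughout the iteration, and |x - ∑_{j=1}^N b_j β^{-j}| ≤ (ε+1) β^{-N} for all N. -/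
/-- Robustness of the β-encoder with a flaky quantizer of tolerance `ε`: if
`1 < β < (2+ε)/(ε+1)`, `u 1 = βx`, `u (j+1) = β(u j - b j)`, and the bits obey
the flaky quantizer rule (`b j = 1` when `u j ≥ ν`, `b j = -1` when `u j < -ν`,
arbitrary sign when `|u j| ≤ ν ≤ ε`), then `|u j| ≤ β(1+ε)` for all `j ≥ 1`,
and `|x - ∑_{j=1}^N b j β^{-j}| ≤ (ε+1) β^{-N}` for all `N`. -/
theorem beta_encoder_flaky_robust (β ε ν x : ℝ)
    (hε : 0 < ε) (hν : 0 ≤ ν) (hνε : ν ≤ ε)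
    (hx : x ∈ Set.Icc (-1 : ℝ) 1)
    (hβ1 : 1 < β) (hβ2 : β < (2 + ε) / (ε + 1))
    (u b : ℕ → ℝ)
    (hu1 : u 1 = β * x)
    (hrec : ∀ j : ℕ, 1 ≤ j → u (j+1) = β * (u j - b j))
    (hq : ∀ j : ℕ, 1 ≤ j →
      (b j = -1 ∨ b j = 1) ∧ (ν ≤ u j → b j = 1) ∧ (u j < -ν → b j = -1)) :
    (∀ j : ℕ, 1 ≤ j → |u j| ≤ β * (1 + ε)) ∧
    ∀ N : ℕ, |x - ∑ j ∈ Finset.Icc 1 N, b j * β ^ (-(j : ℤ))| ≤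
      (ε + 1) * β ^ (-(N : ℤ)) := by
  have hβ0 : (0:ℝ) < β := lt_trans one_pos hβ1
  have hβne : β ≠ 0 := ne_of_gt hβ0
  have hkey : β * (ε + 1) < 2 + ε := (lt_div_iff₀ (by linarith)).mp hβ2
  have habsx : |x| ≤ 1 := abs_le.mpr ⟨hx.1, hx.2⟩
  have hbound : ∀ j : ℕ, 1 ≤ j → |u j| ≤ β * (1 + ε) := by
    intro j hj
    induction j with
    | zero => omega
    | succ n ih =>
      rcases Nat.lt_or_ge n 1 with h | hn
      · have hn0 : n = 0 := by omega
        subst hn0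
        rw [hu1, abs_mul, abs_of_pos hβ0]
        nlinarith
      · have ihn := ih hn
        obtain ⟨hb, h1, h2⟩ := hq n hn
        have hdiff : |u n - b n| ≤ 1 + ε := by
          rw [abs_le] at ihn
          rcases le_or_gt ν (u n) with hc | hc
          · rw [h1 hc, abs_le]; constructor <;> nlinarith
          · rcases lt_or_ge (u n) (-ν) with hc2 | hc2
            · rw [h2 hc2, abs_le]; constructor <;> nlinarith
            · rcases hb with hb | hb <;> rw [hb, abs_le] <;>
                constructor <;> nlinarith
        rw [hrec n hn, abs_mul, abs_of_pos hβ0]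
        exact mul_le_mul_of_nonneg_left hdiff (le_of_lt hβ0)
  refine ⟨hbound, ?_⟩
  have hstate : ∀ N : ℕ,
      x - ∑ j ∈ Finset.Icc 1 N, b j * β ^ (-(j : ℤ)) =
        u (N+1) * β ^ (-((N : ℤ)+1)) := by
    intro N
    induction N with
    | zero =>
      simp [hu1]
      field_simp
    | succ n ih =>
      rw [Finset.sum_Icc_succ_top (by omega : 1 ≤ n+1)]
      have : x - (∑ j ∈ Finset.Icc 1 n, b j * β ^ (-(j : ℤ)) +
          b (n+1) * β ^ (-((n+1 : ℕ) : ℤ))) =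
          (x - ∑ j ∈ Finset.Icc 1 n, b j * β ^ (-(j : ℤ))) -
          b (n+1) * β ^ (-((n : ℤ)+1)) := by push_cast; ring
      rw [this, ih, hrec (n+1) (by omega)]
      have h2 : β ^ (-((n:ℤ)+1+1)) = β ^ (-((n:ℤ)+1)) * β⁻¹ := by
        rw [← zpow_neg_one, ← zpow_add₀ hβne]; ring_nf
      push_cast
      rw [h2]
      field_simp
  intro N
  rw [hstate N, abs_mul, abs_of_pos (zpow_pos hβ0 _)]
  have hN : |u (N+1)| ≤ β * (1+ε) := hbound (N+1) (by omega)
  have h3 : β ^ (-((N : ℤ)+1)) = β ^ (-(N:ℤ)) * β⁻¹ := by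
    rw [← zpow_neg_one, ← zpow_add₀ hβne]; ring_nf
  rw [h3, ← mul_assoc]
  have hzn : (0:ℝ) < β ^ (-(N:ℤ)) := zpow_pos hβ0 _
  calc |u (N+1)| * β ^ (-(N:ℤ)) * β⁻¹ ≤ (β * (1+ε)) * β ^ (-(N:ℤ)) * β⁻¹ := by
        apply mul_le_mul_of_nonneg_right
        · exact mul_le_mul_of_nonneg_right hN (le_of_lt hzn)
        · positivity
    _ = (ε + 1) * β ^ (-(N:ℤ)) := by field_simp; ring
end
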